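/- arXiv:math/0611304 — 8 statements merged into one kernel-verified Lean document; each statement's English description precedes it below -/
import Mathlib

section
/- For a Bohr set B(Γ,δ) in a finite abelian group G, there is a set X ⊆ G with |X| ≤ 4^{|Γ|} such that B(Γ,2δ) ⊆ ⋃_{x ∈ X} (x + B(Γ,δ)). -/
/-!
Rescale the coordinates `arg γ(y)`, `γ ∈ Γ`, by `2πδ`: on `B(Γ,2δ)` the rescaled vector lies in
the cube `[-2,2]^Γ`, which is the union of `4^|Γ|` unit cubes. Choose one point of `B(Γ,2δ)` in
each occupied unit cube. If `x, y` lie in the same one, then `|arg γ(y) - arg γ(x)| ≤ 2πδ`, and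
`arg γ(y - x)` is the representative of `arg γ(y) - arg γ(x)` modulo `2π` in `(-π, π]`, so it is
no larger in absolute value.
-/

open Finset Real

theorem Real.Angle.abs_toReal_coe_le (θ : ℝ) : |(θ : Real.Angle).toReal| ≤ |θ| := by
  by_cases h : θ ∈ Set.Ioc (-π) π
  · rw [Real.Angle.toReal_coe_eq_self_iff_mem_Ioc.mpr h]
  · have : π ≤ |θ| := by
      rw [Set.mem_Ioc, not_and_or, not_lt, not_le] at h
      rcases h with h | h
      · rw [abs_of_neg (by linarith [pi_pos])]; linarith
      · rw [abs_of_pos (by linarith [pi_pos])]; exact h.le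
    exact (Real.Angle.abs_toReal_le_pi _).trans this

theorem Complex.abs_arg_div_le {x y : ℂ} (hx : x ≠ 0) (hy : y ≠ 0) :
    |arg (x / y)| ≤ |arg x - arg y| := by
  rw [← arg_coe_angle_toReal_eq_arg, arg_div_coe_angle hx hy, ← Real.Angle.coe_sub]
  exact Real.Angle.abs_toReal_coe_le _

theorem AddChar.apply_ne_zero {G : Type*} [AddGroup G] (γ : AddChar G ℂ) (x : G) : γ x ≠ 0 :=
  left_ne_zero_of_mul_eq_one (by rw [← γ.map_add_eq_mul, add_neg_cancel, γ.map_zero_eq_one])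

theorem AddChar.abs_arg_apply_sub_le {G : Type*} [AddCommGroup G] (γ : AddChar G ℂ) (x y : G) :
    |Complex.arg (γ (x - y))| ≤ |Complex.arg (γ x) - Complex.arg (γ y)| := by
  rw [AddChar.map_sub_eq_div]
  exact Complex.abs_arg_div_le (γ.apply_ne_zero x) (γ.apply_ne_zero y)

section UnitCells

variable {k : ℤ} {t u : ℝ}

theorem cast_min_floor_le (k : ℤ) (t : ℝ) : ((min ⌊t⌋ k : ℤ) : ℝ) ≤ t :=
  (Int.cast_le.mpr (min_le_left _ _)).trans (Int.floor_le t)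

theorem le_cast_min_floor_add_one (ht : t ≤ k + 1) : t ≤ ((min ⌊t⌋ k : ℤ) : ℝ) + 1 := by
  rcases le_total ⌊t⌋ k with h | h
  · rw [min_eq_left h]; exact (Int.lt_floor_add_one t).le
  · rw [min_eq_right h]; exact ht

theorem abs_sub_le_one_of_min_floor_eq (ht : t ≤ k + 1) (hu : u ≤ k + 1)
    (h : min ⌊t⌋ k = min ⌊u⌋ k) : |t - u| ≤ 1 := by
  have ht₁ := le_cast_min_floor_add_one ht
  have hu₁ := le_cast_min_floor_add_one hu
  have ht₀ := cast_min_floor_le k t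
  have hu₀ := cast_min_floor_le k u
  rw [h] at ht₁ ht₀
  rw [abs_sub_le_iff]; constructor <;> linarith

end UnitCells

theorem exists_card_le_forall_abs_sub_le_one {α ι : Type*} [Fintype ι] (k : ℕ) (hk : k ≠ 0)
    (s : Finset α) (v : α → ι → ℝ) (hv : ∀ a ∈ s, ∀ i, |v a i| ≤ k) :
    ∃ X : Finset α, X.card ≤ (2 * k) ^ Fintype.card ι ∧
      ∀ a ∈ s, ∃ x ∈ X, ∀ i, |v a i - v x i| ≤ 1 := by
  classical
  set cell : α → ι → ℤ := fun a i => min ⌊v a i⌋ (k - 1)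
  have hle : ∀ a ∈ s, ∀ i, v a i ≤ ((k - 1 : ℤ) : ℝ) + 1 := fun a ha i => by
    push_cast; linarith [le_of_abs_le (hv a ha i)]
  have hcells : s.image cell ⊆ Fintype.piFinset fun _ => Icc (-(k : ℤ)) (k - 1) := by
    simp only [subset_iff, mem_image, Fintype.mem_piFinset, mem_Icc]
    rintro _ ⟨a, ha, rfl⟩ i
    have : -(k : ℝ) ≤ v a i := neg_le_of_abs_le (hv a ha i)
    exact ⟨le_min (Int.le_floor.mpr (by exact_mod_cast this)) (by omega), min_le_right _ _⟩
  obtain ⟨X, hXs, hinj, hX⟩ := exists_subset_injOn_image_eq_of_surjOn (s : Set α) (s.image cell)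
    (by rw [Set.SurjOn, coe_image])
  refine ⟨X, ?_, fun a ha => ?_⟩
  · calc X.card = (s.image cell).card := by rw [← hX, card_image_of_injOn hinj]
      _ ≤ _ := card_le_card hcells
      _ = (2 * k) ^ Fintype.card ι := by
        simp only [Fintype.card_piFinset, Int.card_Icc, prod_const, card_univ]
        congr 1
        omega
  · obtain ⟨x, hx, hxa⟩ := mem_image.mp (hX ▸ mem_image_of_mem cell ha)
    exact ⟨x, hx, fun i => abs_sub_le_one_of_min_floor_eq (hle a ha i) (hle x (hXs hx) i)
      (congrFun hxa i).symm⟩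

theorem stmt4_general {G : Type*} [AddCommGroup G] [Fintype G]
    (Γ : Finset (AddChar G ℂ)) (δ : ℝ) (hδ0 : 0 < δ) :
    ∃ X : Finset G, X.card ≤ 4 ^ Γ.card ∧
      ∀ y : G, (∀ γ ∈ Γ, |Complex.arg (γ y)| / (2 * π) ≤ 2 * δ) →
        ∃ x ∈ X, ∀ γ ∈ Γ, |Complex.arg (γ (y - x))| / (2 * π) ≤ δ := by
  classical
  have hπδ : 0 < 2 * π * δ := by positivity
  set bohr := univ.filter fun y : G => ∀ γ ∈ Γ, |Complex.arg (γ y)| / (2 * π) ≤ 2 * δ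
  set v : G → Γ → ℝ := fun y γ => Complex.arg (γ.1 y) / (2 * π * δ)
  have hv : ∀ y ∈ bohr, ∀ γ : Γ, |v y γ| ≤ (2 : ℕ) := by
    intro y hy γ
    have := (mem_filter.mp hy).2 γ γ.2
    rw [div_le_iff₀ (by positivity)] at this
    rw [abs_div, abs_of_pos hπδ, div_le_iff₀ hπδ]
    push_cast; linarith
  obtain ⟨X, hcard, hX⟩ := exists_card_le_forall_abs_sub_le_one 2 two_ne_zero bohr v hv
  refine ⟨X, by simpa using hcard, fun y hy => ?_⟩
  obtain ⟨x, hx, hxy⟩ := hX y (mem_filter.mpr ⟨mem_univ y, hy⟩)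
  refine ⟨x, hx, fun γ hγ => ?_⟩
  have hclose := hxy ⟨γ, hγ⟩
  rw [← sub_div, abs_div, abs_of_pos hπδ, div_le_one hπδ] at hclose
  rw [div_le_iff₀ (by positivity)]
  linarith [γ.abs_arg_apply_sub_le y x]

/-- A Bohr set `B(Γ,2δ)` can be covered by at most `4^|Γ|` translates of `B(Γ,δ)`. -/
theorem stmt4 {G : Type*} [AddCommGroup G] [Fintype G]
    (Γ : Finset (AddChar G ℂ)) (δ : ℝ) (hδ0 : 0 < δ) (hδ1 : δ ≤ 1) :
    ∃ X : Finset G, X.card ≤ 4 ^ Γ.card ∧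
      ∀ y : G, (∀ γ ∈ Γ, |Complex.arg (γ y)| / (2 * π) ≤ 2 * δ) →
        ∃ x ∈ X, ∀ γ ∈ Γ, |Complex.arg (γ (y - x))| / (2 * π) ≤ δ :=
  stmt4_general Γ δ hδ0
end

section
/- If B⁽¹⁾,…,B⁽ᵏ⁾ are Bourgain systems on a finite abelian group G of dimensions d₁,…,d_k, then their pointwise intersection (⋂ᵢ B⁽ⁱ⁾_ρ)_ρ is a Bourgain system of dimension at most 2(d₁+⋯+d_k) and density at least 4^{−(d₁+⋯+d_{k−1})} 2^{−d_k} ∏ᵢ μ_G(B⁽ⁱ⁾). -/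
/-!
If each `B⁽ⁱ⁾_{2ρ}` is covered by `2^{2dᵢ}` translates `x + B⁽ⁱ⁾_{ρ/2}` (doubling twice), then
the tuples of centres give at most `2^{2∑dᵢ}` cells covering `⋂ᵢ B⁽ⁱ⁾_{2ρ}`; fixing one point in
each nonempty cell, every other point of the cell differs from it by an element of
`⋂ᵢ (B⁽ⁱ⁾_{ρ/2} - B⁽ⁱ⁾_{ρ/2}) ⊆ ⋂ᵢ B⁽ⁱ⁾_ρ`.

For the density, averaging over all tuples `t` shows that some `⋂ᵢ (tᵢ + B⁽ⁱ⁾_{1/2})` has at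
least `|G| ∏ᵢ μ(B⁽ⁱ⁾_{1/2})` elements. Subtracting one of its points maps it injectively into
`⋂ᵢ (B⁽ⁱ⁾_{1/2} - B⁽ⁱ⁾_{1/2}) ⊆ ⋂ᵢ B⁽ⁱ⁾₁`, and doubling gives
`μ(B⁽ⁱ⁾_{1/2}) ≥ 2^{-dᵢ} μ(B⁽ⁱ⁾₁)`. This yields the density bound with the constant `2^{-∑dᵢ}`,
which is at least `4^{-(d₀+⋯+d_{k-1})} 2^{-d_k}` because a doubling cover is nonempty, so `dᵢ ≥ 0`.
-/

open Finset

/-- A Bourgain system of dimension `d` on a finite abelian group `G`: a family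
`(B ρ)_{ρ ∈ (0,2]}` of subsets satisfying nesting, containing `0`, symmetry, addition and
`2^d`-doubling. -/
def IsBourgainSystem {G : Type*} [AddCommGroup G] [Fintype G] (B : ℝ → Finset G) (d : ℝ) :
    Prop :=
  (∀ ρ ρ' : ℝ, 0 < ρ' → ρ' ≤ ρ → ρ ≤ 2 → B ρ' ⊆ B ρ) ∧
  (∀ ρ : ℝ, 0 < ρ → ρ ≤ 2 → (0 : G) ∈ B ρ) ∧
  (∀ ρ : ℝ, 0 < ρ → ρ ≤ 2 → ∀ x ∈ B ρ, -x ∈ B ρ) ∧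
  (∀ ρ ρ' : ℝ, 0 < ρ → 0 < ρ' → ρ + ρ' ≤ 1 →
    ∀ x ∈ B ρ, ∀ y ∈ B ρ', x + y ∈ B (ρ + ρ')) ∧
  (∀ ρ : ℝ, 0 < ρ → ρ ≤ 1 → ∃ X : Finset G, (X.card : ℝ) ≤ (2 : ℝ) ^ d ∧
    ∀ y ∈ B (2 * ρ), ∃ x ∈ X, y - x ∈ B ρ)

/-- The density `μ_G(B) = μ_G(B₁)` of a Bourgain system. -/
noncomputable def bsDensity {G : Type*} [AddCommGroup G] [Fintype G] (B : ℝ → Finset G) : ℝ :=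
  ((B 1).card : ℝ) / (Fintype.card G : ℝ)

/-- A Bourgain system of dimension `d` is regular if
`1 - 8d|η| ≤ μ_G(B₁)/μ_G(B_{1+η}) ≤ 1 + 8d|η|` whenever `d|η| ≤ 1/8`. -/
def IsRegularBS {G : Type*} [AddCommGroup G] [Fintype G] (B : ℝ → Finset G) (d : ℝ) : Prop :=
  ∀ η : ℝ, d * |η| ≤ 1 / 8 →
    1 - 8 * d * |η| ≤ ((B 1).card : ℝ) / ((B (1 + η)).card : ℝ) ∧
    ((B 1).card : ℝ) / ((B (1 + η)).card : ℝ) ≤ 1 + 8 * d * |η|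

open Pointwise

section CoveringAndCounting

variable {G ι : Type*} [AddCommGroup G] [Fintype G] [DecidableEq G] [Fintype ι]

theorem exists_cover_inf_of_forall_cover (S T X : ι → Finset G)
    (hX : ∀ i, ∀ y ∈ S i, ∃ x ∈ X i, y - x ∈ T i) :
    ∃ Y : Finset G, #Y ≤ ∏ i, #(X i) ∧
      ∀ y ∈ univ.inf S, ∃ x ∈ Y, y - x ∈ univ.inf fun i => T i - T i := by
  classical
  let f : (ι → G) → G := fun t =>
    if h : ∃ y ∈ univ.inf S, ∀ i, y - t i ∈ T i then h.choose else 0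
  refine ⟨(Fintype.piFinset X).image f, card_image_le.trans (Fintype.card_piFinset X).le, ?_⟩
  intro y hy
  choose t ht hyt using fun i => hX i y (mem_inf.1 hy i (mem_univ i))
  have h : ∃ y ∈ univ.inf S, ∀ i, y - t i ∈ T i := ⟨y, hy, hyt⟩
  refine ⟨f t, mem_image_of_mem f (Fintype.mem_piFinset.2 ht), mem_inf.2 fun i _ => ?_⟩
  simpa [f, dif_pos h] using sub_mem_sub (hyt i) (h.choose_spec.2 i)

theorem card_filter_sub_mem_le_card_inf_sub (A : ι → Finset G) (t : ι → G) :
    #{x | ∀ i, x - t i ∈ A i} ≤ #(univ.inf fun i => A i - A i) := by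
  obtain he | ⟨y₀, hy₀⟩ := eq_empty_or_nonempty ({x | ∀ i, x - t i ∈ A i} : Finset G)
  · simp [he]
  refine card_le_card_of_injOn (· - y₀) (fun y hy => ?_) (fun a _ b _ h => sub_left_injective h)
  simp only [coe_filter, mem_filter, mem_univ, true_and, Set.mem_ofPred_eq, mem_coe] at hy hy₀ ⊢
  exact mem_inf.2 fun i _ => by simpa using sub_mem_sub (hy i) (hy₀ i)

variable [DecidableEq ι]

theorem sum_card_filter_sub_mem (A : ι → Finset G) :
    ∑ t : ι → G, #{x | ∀ i, x - t i ∈ A i} = Fintype.card G * ∏ i, #(A i) := by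
  refine (sum_card_bipartiteAbove_eq_sum_card_bipartiteBelow
    (r := fun (t : ι → G) x => ∀ i, x - t i ∈ A i)).trans ?_
  have h : ∀ x : G, #{t : ι → G | ∀ i, x - t i ∈ A i} = ∏ i, #(A i) := by
    intro x
    rw [← Fintype.card_piFinset]
    refine card_nbij' (fun t i => x - t i) (fun a i => x - a i) ?_ ?_ ?_ ?_ <;>
      intro t ht <;> simp_all
  simp only [bipartiteBelow, h, sum_const, card_univ, smul_eq_mul]

theorem exists_prod_card_mul_le_card_filter_sub_mem (A : ι → Finset G) :
    ∃ t : ι → G, (∏ i, #(A i)) * Fintype.card G ≤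
      Fintype.card G ^ Fintype.card ι * #{x | ∀ i, x - t i ∈ A i} := by
  obtain ⟨t, -, ht⟩ := exists_le_of_sum_le (s := univ)
    (f := fun _ => (∏ i, #(A i)) * Fintype.card G)
    (g := fun t : ι → G => Fintype.card G ^ Fintype.card ι * #{x | ∀ i, x - t i ∈ A i})
    univ_nonempty (by
      rw [sum_const, card_univ, Fintype.card_fun, smul_eq_mul, ← mul_sum,
        sum_card_filter_sub_mem]
      exact le_of_eq (by ring))
  exact ⟨t, ht⟩

end CoveringAndCounting

namespace IsBourgainSystem

variable {G : Type*} [AddCommGroup G] [Fintype G] {B : ℝ → Finset G} {d : ℝ}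

theorem dim_nonneg (hB : IsBourgainSystem B d) : 0 ≤ d := by
  obtain ⟨X, hXcard, hX⟩ := hB.2.2.2.2 1 one_pos le_rfl
  obtain ⟨x, hx, -⟩ := hX 0 (hB.2.1 _ (by norm_num) (by norm_num))
  by_contra! hd
  have hX₁ : (1 : ℝ) ≤ #X := by exact_mod_cast card_pos.2 ⟨x, hx⟩
  linarith [Real.rpow_lt_one_of_one_lt_of_neg one_lt_two hd]

variable [DecidableEq G]

theorem sub_subset {ρ : ℝ} (hB : IsBourgainSystem B d) (hρ : 0 < ρ) (hρ₁ : ρ ≤ 1) :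
    B (ρ / 2) - B (ρ / 2) ⊆ B ρ := by
  intro z hz
  obtain ⟨x, hx, y, hy, rfl⟩ := mem_sub.1 hz
  have := hB.2.2.2.1 (ρ / 2) (ρ / 2) (by positivity) (by positivity) (by linarith) x hx (-y)
    (hB.2.2.1 _ (by positivity) (by linarith) y hy)
  rwa [add_halves, ← sub_eq_add_neg] at this

theorem exists_cover_half {ρ : ℝ} (hB : IsBourgainSystem B d) (hρ : 0 < ρ) (hρ₁ : ρ ≤ 1) :
    ∃ X : Finset G, (#X : ℝ) ≤ 2 ^ (2 * d) ∧ ∀ y ∈ B (2 * ρ), ∃ x ∈ X, y - x ∈ B (ρ / 2) := by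
  obtain ⟨X₁, hX₁card, hX₁⟩ := hB.2.2.2.2 ρ hρ hρ₁
  obtain ⟨X₂, hX₂card, hX₂⟩ := hB.2.2.2.2 (ρ / 2) (by positivity) (by linarith)
  refine ⟨X₁ + X₂, ?_, fun y hy => ?_⟩
  · calc (#(X₁ + X₂) : ℝ) ≤ #X₁ * #X₂ := by exact_mod_cast card_add_le
      _ ≤ 2 ^ d * 2 ^ d := by gcongr
      _ = 2 ^ (2 * d) := by rw [← Real.rpow_add two_pos, two_mul]
  obtain ⟨x₁, hx₁, hyx₁⟩ := hX₁ y hy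
  obtain ⟨x₂, hx₂, hyx₂⟩ := hX₂ (y - x₁) (by rwa [mul_div_cancel₀ ρ two_ne_zero])
  exact ⟨x₁ + x₂, add_mem_add hx₁ hx₂, by rwa [← sub_sub]⟩

theorem card_le_two_rpow_mul_card_half (hB : IsBourgainSystem B d) :
    (#(B 1) : ℝ) ≤ 2 ^ d * #(B (1 / 2)) := by
  obtain ⟨X, hXcard, hX⟩ := hB.2.2.2.2 (1 / 2) (by norm_num) (by norm_num)
  have hcover : B 1 ⊆ X + B (1 / 2) := fun y hy => by
    obtain ⟨x, hx, hyx⟩ := hX y (by norm_num [hy])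
    exact mem_add.2 ⟨x, hx, y - x, hyx, add_sub_cancel x y⟩
  calc (#(B 1) : ℝ) ≤ #X * #(B (1 / 2)) := by
        exact_mod_cast (card_le_card hcover).trans card_add_le
    _ ≤ 2 ^ d * #(B (1 / 2)) := by gcongr

end IsBourgainSystem

section Intersection

variable {G ι : Type*} [AddCommGroup G] [Fintype G] [DecidableEq G] [Fintype ι]
  {B : ι → ℝ → Finset G} {d : ι → ℝ}

theorem IsBourgainSystem.inf (hB : ∀ i, IsBourgainSystem (B i) (d i)) :
    IsBourgainSystem (fun ρ => univ.inf fun i => B i ρ) (2 * ∑ i, d i) := by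
  simp only [IsBourgainSystem, mem_inf, mem_univ, true_imp_iff]
  refine ⟨fun ρ ρ' h₁ h₂ h₃ x hx => ?_, fun ρ h₁ h₂ i => (hB i).2.1 ρ h₁ h₂,
    fun ρ h₁ h₂ x hx i => (hB i).2.2.1 ρ h₁ h₂ x (hx i),
    fun ρ ρ' h₁ h₂ h₃ x hx y hy i => (hB i).2.2.2.1 ρ ρ' h₁ h₂ h₃ x (hx i) y (hy i),
    fun ρ hρ hρ₁ => ?_⟩
  · exact mem_inf.2 fun i _ => (hB i).1 ρ ρ' h₁ h₂ h₃ (mem_inf.1 hx i (mem_univ i))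
  choose X hXcard hX using fun i => (hB i).exists_cover_half hρ hρ₁
  obtain ⟨Y, hYcard, hY⟩ := exists_cover_inf_of_forall_cover _ _ X hX
  refine ⟨Y, ?_, fun y hy => ?_⟩
  · calc (#Y : ℝ) ≤ ∏ i, (#(X i) : ℝ) := by exact_mod_cast hYcard
      _ ≤ ∏ i, (2 : ℝ) ^ (2 * d i) := by gcongr with i; exact hXcard i
      _ = 2 ^ (2 * ∑ i, d i) := by rw [mul_sum, Real.rpow_sum_of_pos two_pos]
  obtain ⟨x, hx, hyx⟩ := hY y (mem_inf.2 fun i _ => hy i)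
  exact ⟨x, hx, fun i => (hB i).sub_subset hρ hρ₁ (mem_inf.1 hyx i (mem_univ i))⟩

theorem two_rpow_neg_sum_mul_prod_bsDensity_le (hB : ∀ i, IsBourgainSystem (B i) (d i)) :
    (2 : ℝ) ^ (-∑ i, d i) * ∏ i, bsDensity (B i) ≤
      bsDensity (fun ρ => univ.inf fun i => B i ρ) := by
  classical
  set n : ℝ := (Fintype.card G : ℝ)
  have hn : 0 < n := by simp only [n]; exact_mod_cast Fintype.card_pos
  obtain ⟨t, ht⟩ := exists_prod_card_mul_le_card_filter_sub_mem fun i => B i (1 / 2)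
  have hI : #{x | ∀ i, x - t i ∈ B i (1 / 2)} ≤ #(univ.inf fun i => B i 1) :=
    (card_filter_sub_mem_le_card_inf_sub _ t).trans <| card_le_card <|
      inf_mono_fun fun i _ => by simpa using (hB i).sub_subset one_pos le_rfl
  have hA : (∏ i, (#(B i (1 / 2)) : ℝ)) * n ≤
      n ^ Fintype.card ι * #(univ.inf fun i => B i 1) := by
    simp only [n]; exact_mod_cast ht.trans (Nat.mul_le_mul_left _ hI)
  unfold bsDensity
  calc (2 : ℝ) ^ (-∑ i, d i) * ∏ i, ((#(B i 1) : ℝ) / n)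
      = 2 ^ (-∑ i, d i) * (∏ i, (#(B i 1) : ℝ)) / n ^ Fintype.card ι := by
        rw [prod_div_distrib, prod_const, card_univ, mul_div_assoc]
    _ ≤ 2 ^ (-∑ i, d i) * (∏ i, 2 ^ d i * (#(B i (1 / 2)) : ℝ)) / n ^ Fintype.card ι := by
        gcongr with i; exact (hB i).card_le_two_rpow_mul_card_half
    _ = (∏ i, (#(B i (1 / 2)) : ℝ)) / n ^ Fintype.card ι := by
        rw [prod_mul_distrib, ← Real.rpow_sum_of_pos two_pos, ← mul_assoc,
          ← Real.rpow_add two_pos, neg_add_cancel, Real.rpow_zero, one_mul]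
    _ ≤ #(univ.inf fun i => B i 1) / n := by
        rw [div_le_div_iff₀ (by positivity) hn]; linarith

end Intersection

theorem four_rpow_neg_mul_two_rpow_neg_le {a : ℝ} (b : ℝ) (ha : 0 ≤ a) :
    (4 : ℝ) ^ (-a) * 2 ^ (-b) ≤ 2 ^ (-(a + b)) := by
  rw [neg_add, Real.rpow_add two_pos]
  exact mul_le_mul_of_nonneg_right
    (Real.rpow_le_rpow_of_nonpos two_pos (by norm_num) (neg_nonpos.2 ha)) (by positivity)

theorem stmt6_general {G : Type*} [AddCommGroup G] [Fintype G] [DecidableEq G] (k : ℕ)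
    (B : Fin (k + 1) → ℝ → Finset G) (d : Fin (k + 1) → ℝ)
    (hB : ∀ i, IsBourgainSystem (B i) (d i)) :
    IsBourgainSystem (fun ρ => Finset.univ.inf fun i => B i ρ) (2 * ∑ i, d i) ∧
      (4 : ℝ) ^ (-(∑ i : Fin k, d i.castSucc)) * (2 : ℝ) ^ (-(d (Fin.last k))) *
          ∏ i, bsDensity (B i)
        ≤ bsDensity (fun ρ => Finset.univ.inf fun i => B i ρ) := by
  refine ⟨IsBourgainSystem.inf hB, le_trans ?_ (two_rpow_neg_sum_mul_prod_bsDensity_le hB)⟩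
  have hdensity : 0 ≤ ∏ i, bsDensity (B i) :=
    prod_nonneg fun i _ => div_nonneg (Nat.cast_nonneg _) (Nat.cast_nonneg _)
  rw [Fin.sum_univ_castSucc]
  gcongr
  exact four_rpow_neg_mul_two_rpow_neg_le _ (sum_nonneg fun i _ => (hB _).dim_nonneg)

/-- The intersection of Bourgain systems `B⁽⁰⁾,…,B⁽ᵏ⁾` of dimensions `d₀,…,d_k` is a Bourgain
system of dimension at most `2(d₀ + ⋯ + d_k)` and density at least
`4^{-(d₀+⋯+d_{k-1})} 2^{-d_k} ∏ᵢ μ_G(B⁽ⁱ⁾)`. -/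
theorem stmt6 {G : Type*} [AddCommGroup G] [Fintype G] [DecidableEq G] (k : ℕ)
    (B : Fin (k + 1) → ℝ → Finset G) (d : Fin (k + 1) → ℝ)
    (hd : ∀ i, 1 ≤ d i) (hB : ∀ i, IsBourgainSystem (B i) (d i)) :
    IsBourgainSystem (fun ρ => Finset.univ.inf fun i => B i ρ) (2 * ∑ i, d i) ∧
      (4 : ℝ) ^ (-(∑ i : Fin k, d i.castSucc)) * (2 : ℝ) ^ (-(d (Fin.last k))) *
          ∏ i, bsDensity (B i)
        ≤ bsDensity (fun ρ => Finset.univ.inf fun i => B i ρ) :=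
  stmt6_general k B d hB
end

section
/- If B is a regular Bourgain system of dimension d on a finite abelian group G and y ∈ B_η, then the total variation distance ‖(y + β) − β‖ ≤ 2⁴ d η, where β is the uniform probability measure on B₁ and y + β is its translate by y. -/
open Finset

/-- For a regular Bourgain system of dimension `d`, if `y ∈ B_η` then the total variation
distance between the translate `y + β` of the uniform measure `β` on `B₁` and `β` itself is
at most `2⁴ d η`. -/
theorem stmt8 {G : Type*} [AddCommGroup G] [Fintype G] [DecidableEq G] (B : ℝ → Finset G)
    (d : ℝ) (hd : 1 ≤ d) (hB : IsBourgainSystem B d) (hreg : IsRegularBS B d)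
    (η : ℝ) (hη0 : 0 < η) (hη2 : η ≤ 2) (y : G) (hy : y ∈ B η) :
    (∑ x : G, |((if x - y ∈ B 1 then (1 : ℝ) else 0) - if x ∈ B 1 then (1 : ℝ) else 0)|)
        / ((B 1).card : ℝ) ≤ 2 ^ 4 * d * η := by

  obtain ⟨hnest, hzero, hsym, hadd, -⟩ := hB
  have hn1 : (1 : ℝ) ≤ ((B 1).card : ℝ) := by
    have : 0 ∈ B 1 := hzero 1 one_pos (by norm_num)
    exact_mod_cast Finset.card_pos.mpr ⟨0, this⟩
  have hn1pos : (0 : ℝ) < ((B 1).card : ℝ) := by linarith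
  have hsum1 : (∑ x : G, (if x - y ∈ B 1 then (1 : ℝ) else 0)) = ((B 1).card : ℝ) := by
    refine (Fintype.sum_equiv (Equiv.subRight y) _
      (fun z => if z ∈ B 1 then (1 : ℝ) else 0) (fun x => rfl)).trans ?_
    simp
  have hsum2 : (∑ x : G, (if x ∈ B 1 then (1 : ℝ) else 0)) = ((B 1).card : ℝ) := by simp
  by_cases hcase : d * η ≤ 1 / 8
  · -- main case
    have hη1 : η ≤ 1 / 8 := by nlinarith
    have hpos : (0 : ℝ) < 1 - η := by linarith
    have hmem : ∀ x ∈ B (1 - η), x ∈ B 1 ∧ x - y ∈ B 1 := by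
      intro x hx
      refine ⟨hnest 1 (1 - η) hpos (by linarith) (by norm_num) hx, ?_⟩
      have hny : -y ∈ B η := hsym η hη0 (by linarith) y hy
      have := hadd (1 - η) η hpos hη0 (by ring_nf; exact le_refl 1) x hx (-y) hny
      rw [show (1 - η) + η = 1 by ring] at this
      rwa [← sub_eq_add_neg] at this
    have hpt : ∀ x : G,
        |((if x - y ∈ B 1 then (1 : ℝ) else 0) - if x ∈ B 1 then (1 : ℝ) else 0)| ≤
        (if x - y ∈ B 1 then (1 : ℝ) else 0) + (if x ∈ B 1 then (1 : ℝ) else 0)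
          - 2 * (if x ∈ B (1 - η) then (1 : ℝ) else 0) := by
      intro x
      by_cases hx : x ∈ B (1 - η)
      · obtain ⟨h1, h2⟩ := hmem x hx
        simp only [hx, h1, h2, if_true, sub_self, abs_zero]
        norm_num
      · simp only [hx, if_false]
        split_ifs <;> norm_num
    have hsum3 : (∑ x : G, (if x ∈ B (1 - η) then (1 : ℝ) else 0)) = ((B (1 - η)).card : ℝ) := by
      simp
    have hbound : (∑ x : G, |((if x - y ∈ B 1 then (1 : ℝ) else 0) - if x ∈ B 1 then (1 : ℝ) else 0)|)
        ≤ 2 * ((B 1).card : ℝ) - 2 * ((B (1 - η)).card : ℝ) := by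
      calc (∑ x : G, |((if x - y ∈ B 1 then (1 : ℝ) else 0) - if x ∈ B 1 then (1 : ℝ) else 0)|)
          ≤ ∑ x : G, ((if x - y ∈ B 1 then (1 : ℝ) else 0) + (if x ∈ B 1 then (1 : ℝ) else 0)
            - 2 * (if x ∈ B (1 - η) then (1 : ℝ) else 0)) := Finset.sum_le_sum fun x _ => hpt x
        _ = 2 * ((B 1).card : ℝ) - 2 * ((B (1 - η)).card : ℝ) := by
            simp only [Finset.sum_sub_distrib, Finset.sum_add_distrib, ← Finset.mul_sum,
              hsum1, hsum2, hsum3]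
            ring
    have hnm1 : (1 : ℝ) ≤ ((B (1 - η)).card : ℝ) := by
      have : 0 ∈ B (1 - η) := hzero (1 - η) hpos (by linarith)
      exact_mod_cast Finset.card_pos.mpr ⟨0, this⟩
    have hreg' := (hreg (-η) (by rwa [abs_neg, abs_of_pos hη0])).2
    rw [abs_neg, abs_of_pos hη0, show (1 : ℝ) + -η = 1 - η by ring] at hreg'
    have hnm : ((B 1).card : ℝ) ≤ (1 + 8 * d * η) * ((B (1 - η)).card : ℝ) := by
      rw [div_le_iff₀ (by linarith)] at hreg'
      linarith
    have hsub : ((B (1 - η)).card : ℝ) ≤ ((B 1).card : ℝ) := by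
      exact_mod_cast Finset.card_le_card (hnest 1 (1 - η) hpos (by linarith) (by norm_num))
    rw [div_le_iff₀ hn1pos]
    have hhint : 8 * d * η * ((B (1 - η)).card : ℝ) ≤ 8 * d * η * ((B 1).card : ℝ) :=
      mul_le_mul_of_nonneg_left hsub (by positivity)
    nlinarith
  · -- trivial case: d * η > 1/8
    push_neg at hcase
    have hbound : (∑ x : G, |((if x - y ∈ B 1 then (1 : ℝ) else 0) - if x ∈ B 1 then (1 : ℝ) else 0)|)
        ≤ 2 * ((B 1).card : ℝ) := by
      calc (∑ x : G, |((if x - y ∈ B 1 then (1 : ℝ) else 0) - if x ∈ B 1 then (1 : ℝ) else 0)|)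
          ≤ ∑ x : G, ((if x - y ∈ B 1 then (1 : ℝ) else 0) + (if x ∈ B 1 then (1 : ℝ) else 0)) := by
            refine Finset.sum_le_sum fun x _ => ?_
            split_ifs <;> norm_num
        _ = 2 * ((B 1).card : ℝ) := by
            rw [Finset.sum_add_distrib, hsum1, hsum2]; ring
    rw [div_le_iff₀ hn1pos]
    nlinarith
end

section
/- Let B be a regular Bourgain system of dimension d on a finite abelian group G with associated uniform measure β on B₁, and f : G → ℂ. Then for all x ∈ G and y ∈ B_η, |f∗β(x+y) − f∗β(x)| ≤ 2⁴ ‖f‖_∞ d η, where (f∗β)(t) = ∫ f(t−u) dβ(u). -/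
open Finset

section SumDifference

variable {ι E : Type*} [SeminormedAddCommGroup E] {g : ι → E} {M : ℝ}

theorem norm_sum_le_card_mul (s : Finset ι) (hM : ∀ i, ‖g i‖ ≤ M) :
    ‖∑ i ∈ s, g i‖ ≤ #s * M := by
  simpa only [sum_const, nsmul_eq_mul] using norm_sum_le_of_le s fun i _ => hM i

theorem norm_sum_sub_sum_le_of_subset [DecidableEq ι] {s t c : Finset ι} (hcs : c ⊆ s)
    (hct : c ⊆ t) (hM : ∀ i, ‖g i‖ ≤ M) :
    ‖∑ i ∈ s, g i - ∑ i ∈ t, g i‖ ≤ (#(s \ c) + #(t \ c)) * M := by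
  rw [← sum_sdiff hcs, ← sum_sdiff hct, add_sub_add_right_eq_sub, add_mul]
  exact (norm_sub_le _ _).trans
    (add_le_add (norm_sum_le_card_mul _ hM) (norm_sum_le_card_mul _ hM))

end SumDifference

theorem Finset.sum_comp_add_sub_eq_sum_image {G E : Type*} [AddCommGroup G] [DecidableEq G]
    [AddCommMonoid E] (s : Finset G) (f : G → E) (x y : G) :
    ∑ u ∈ s, f (x + y - u) = ∑ v ∈ s.image (· - y), f (x - v) := by
  rw [sum_image fun a _ b _ h => sub_left_injective h]
  simp only [sub_sub_eq_add_sub]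

section BourgainSystem

variable {G : Type*} [AddCommGroup G] [Fintype G] {B : ℝ → Finset G} {d η : ℝ}

theorem IsBourgainSystem.subset_image_sub [DecidableEq G] (hB : IsBourgainSystem B d)
    (hη0 : 0 < η) (hη1 : η < 1) {y : G} (hy : y ∈ B η) :
    B (1 - η) ⊆ (B 1).image (· - y) := fun u hu =>
  mem_image.2 ⟨u + y,
    by simpa using hB.2.2.2.1 (1 - η) η (by linarith) hη0 (by linarith) u hu y hy,
    add_sub_cancel_right u y⟩

theorem IsBourgainSystem.card_sdiff_le [DecidableEq G] (hB : IsBourgainSystem B d)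
    (hreg : IsRegularBS B d) (hd : 0 ≤ d) (hη0 : 0 < η) (hη1 : η < 1) (hdη : d * η ≤ 1 / 8) :
    (#(B 1 \ B (1 - η)) : ℝ) ≤ 8 * d * η * #(B 1) := by
  have hsub : B (1 - η) ⊆ B 1 := hB.1 1 (1 - η) (by linarith) (by linarith) one_le_two
  have hpos : (0 : ℝ) < #(B (1 - η)) := by
    exact_mod_cast card_pos.2 ⟨0, hB.2.1 _ (by linarith) (by linarith)⟩
  have hle : (#(B (1 - η)) : ℝ) ≤ #(B 1) := by exact_mod_cast card_le_card hsub
  have hratio := (hreg (-η) (by rwa [abs_neg, abs_of_pos hη0])).2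
  rw [abs_neg, abs_of_pos hη0, ← sub_eq_add_neg, div_le_iff₀ hpos] at hratio
  rw [card_sdiff_of_subset hsub, Nat.cast_sub (card_le_card hsub)]
  nlinarith [mul_le_mul_of_nonneg_left hle (by positivity : 0 ≤ 8 * d * η)]

end BourgainSystem

theorem stmt9_general {G : Type*} [AddCommGroup G] [Fintype G] (B : ℝ → Finset G) (d : ℝ)
    (hd : 1 ≤ d) (hB : IsBourgainSystem B d) (hreg : IsRegularBS B d)
    (f : G → ℂ) (M : ℝ) (hM : ∀ z : G, ‖f z‖ ≤ M)
    (η : ℝ) (hη0 : 0 < η) (x y : G) (hy : y ∈ B η) :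
    ‖(∑ u ∈ B 1, f (x + y - u)) / ((B 1).card : ℂ)
        - (∑ u ∈ B 1, f (x - u)) / ((B 1).card : ℂ)‖ ≤ 2 ^ 4 * M * d * η := by
  classical
  have hM0 : 0 ≤ M := (norm_nonneg _).trans (hM 0)
  have hn : (0 : ℝ) < #(B 1) := by exact_mod_cast card_pos.2 ⟨0, hB.2.1 1 one_pos one_le_two⟩
  have hcard : #((B 1).image (· - y)) = #(B 1) := card_image_of_injective _ sub_left_injective
  rw [div_sub_div_same, norm_div, Complex.norm_natCast, div_le_iff₀ hn,
    sum_comp_add_sub_eq_sum_image]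
  by_cases hdη : d * η ≤ 1 / 8
  · have hη1 : η < 1 := by nlinarith
    have hsub := hB.subset_image_sub hη0 hη1 hy
    have hsub' : B (1 - η) ⊆ B 1 := hB.1 1 (1 - η) (by linarith) (by linarith) one_le_two
    have hsdiff := hB.card_sdiff_le hreg (by linarith) hη0 hη1 hdη
    calc _ ≤ (#((B 1).image (· - y) \ B (1 - η)) + #(B 1 \ B (1 - η))) * M :=
          norm_sum_sub_sum_le_of_subset hsub hsub' fun v => hM _
      _ = 2 * #(B 1 \ B (1 - η)) * M := by
          rw [card_sdiff_of_subset hsub, card_sdiff_of_subset hsub', hcard]; ring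
      _ ≤ 2 * (8 * d * η * #(B 1)) * M := by gcongr
      _ = _ := by ring
  · calc _ ≤ (#((B 1).image (· - y) \ ∅) + #(B 1 \ ∅)) * M :=
          norm_sum_sub_sum_le_of_subset (empty_subset _) (empty_subset _) fun v => hM _
      _ ≤ 2 ^ 4 * M * d * η * #(B 1) := by
          rw [sdiff_empty, sdiff_empty, hcard]
          nlinarith [mul_le_mul_of_nonneg_left (not_le.1 hdη).le (mul_nonneg hM0 hn.le)]

/-- For a regular Bourgain system of dimension `d` with uniform measure `β` on `B₁` and any
`f : G → ℂ` bounded by `M`, if `y ∈ B_η` then `|f∗β(x+y) - f∗β(x)| ≤ 2⁴ M d η`. -/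
theorem stmt9 {G : Type*} [AddCommGroup G] [Fintype G] (B : ℝ → Finset G) (d : ℝ)
    (hd : 1 ≤ d) (hB : IsBourgainSystem B d) (hreg : IsRegularBS B d)
    (f : G → ℂ) (M : ℝ) (hM : ∀ z : G, ‖f z‖ ≤ M)
    (η : ℝ) (hη0 : 0 < η) (hη2 : η ≤ 2) (x y : G) (hy : y ∈ B η) :
    ‖(∑ u ∈ B 1, f (x + y - u)) / ((B 1).card : ℂ)
        - (∑ u ∈ B 1, f (x - u)) / ((B 1).card : ℂ)‖ ≤ 2 ^ 4 * M * d * η :=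
  stmt9_general B d hd hB hreg f M hM η hη0 x y hy
end

section
/- Let B be a regular Bourgain system of dimension d on a finite abelian group G with uniform measure β on B₁, and κ > 0. If γ ∈ Ĝ satisfies |β̂(γ)| ≥ κ, then |1 − γ(x)| ≤ 2⁴ d κ⁻¹ η for all x ∈ B_η, where β̂(γ) := ∫ γ̄ dβ. -/
/-!
Translating `B₁` by `x ∈ B_η` multiplies `∑_{u ∈ B₁} γ̄(u)` by `γ̄(x)`. Both `B₁` and
`x + B₁` contain `B_{1-η}`, so the translate differs from the original sum by at most
`2 |B₁ \ B_{1-η}|`, which regularity bounds by `16 d η |B₁|`. As the sum has modulus at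
least `κ |B₁|`, this gives `|1 - γ(x)| ≤ 16 d η / κ`. When `d η > 1/8`, regularity is
unavailable but the claimed bound exceeds the trivial `|1 - γ(x)| ≤ 2`.
-/

open Finset

open ComplexConjugate

lemma Finset.card_sdiff_le_card_sub_of_subset {α : Type*} [DecidableEq α] {s s' t : Finset α}
    (hts : t ⊆ s) (hts' : t ⊆ s') : #(s \ s') ≤ #s - #t :=
  card_sdiff_of_subset hts ▸ card_le_card (sdiff_subset_sdiff subset_rfl hts')

namespace AddChar

variable {G : Type*} [AddCommGroup G]

lemma norm_sum_conj_le_card [Finite G] (γ : AddChar G ℂ) (s : Finset G) :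
    ‖∑ u ∈ s, conj (γ u)‖ ≤ #s :=
  (norm_sum_le _ _).trans_eq (by simp [γ.norm_apply])

lemma sum_conj_image_add_right [DecidableEq G] (γ : AddChar G ℂ) (s : Finset G) (x : G) :
    ∑ u ∈ s.image (· + x), conj (γ u) = conj (γ x) * ∑ u ∈ s, conj (γ u) := by
  rw [sum_image fun _ _ _ _ ↦ add_right_cancel, mul_sum]
  refine sum_congr rfl fun u _ ↦ ?_
  rw [← map_mul, ← map_add_eq_mul, add_comm]

lemma norm_one_sub_mul_norm_sum_conj_le [Finite G] [DecidableEq G] (γ : AddChar G ℂ)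
    {s t : Finset G} {x : G} (hts : t ⊆ s) (htx : t ⊆ s.image (· + x)) :
    ‖1 - γ x‖ * ‖∑ u ∈ s, conj (γ u)‖ ≤ 2 * (#s - #t : ℝ) := by
  set T := ∑ u ∈ s, conj (γ u)
  have hcard : #(s.image (· + x)) = #s := card_image_of_injective _ (add_left_injective x)
  have hout : #(s \ s.image (· + x)) ≤ #s - #t := card_sdiff_le_card_sub_of_subset hts htx
  have hin : #(s.image (· + x) \ s) ≤ #s - #t :=
    hcard ▸ card_sdiff_le_card_sub_of_subset htx hts
  have hts' : #t ≤ #s := card_le_card hts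
  calc ‖1 - γ x‖ * ‖T‖ = ‖T - conj (γ x) * T‖ := by
        rw [← Complex.norm_conj (1 - γ x), ← norm_mul]; congr 1; simp; ring
    _ = ‖∑ u ∈ s \ s.image (· + x), conj (γ u) -
          ∑ u ∈ s.image (· + x) \ s, conj (γ u)‖ := by
        rw [← sum_conj_image_add_right, sum_sdiff_sub_sum_sdiff]
    _ ≤ #(s \ s.image (· + x)) + #(s.image (· + x) \ s) :=
        (norm_sub_le _ _).trans <|
          add_le_add (norm_sum_conj_le_card γ _) (norm_sum_conj_le_card γ _)
    _ ≤ 2 * (#s - #t : ℝ) := by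
        rw [← Nat.cast_sub hts']; norm_cast; omega

end AddChar

section BourgainSystem

variable {G : Type*} [AddCommGroup G] [Fintype G] {B : ℝ → Finset G} {d : ℝ}

lemma IsBourgainSystem.card_pos (hB : IsBourgainSystem B d) {ρ : ℝ} (hρ : 0 < ρ)
    (hρ2 : ρ ≤ 2) : 0 < (#(B ρ) : ℝ) := by
  exact_mod_cast Finset.card_pos.2 ⟨0, hB.2.1 ρ hρ hρ2⟩

lemma IsBourgainSystem.subset_image_add_right [DecidableEq G] (hB : IsBourgainSystem B d)
    {η : ℝ} (hη : 0 < η) (hη1 : η < 1) {x : G} (hx : x ∈ B η) :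
    B (1 - η) ⊆ (B 1).image (· + x) := by
  intro v hv
  refine mem_image.2 ⟨v + -x, ?_, neg_add_cancel_right v x⟩
  simpa using hB.2.2.2.1 (1 - η) η (by linarith) hη (by linarith) v hv (-x)
    (hB.2.2.1 η hη (by linarith) x hx)

lemma IsRegularBS.card_sub_le (hreg : IsRegularBS B d) (hB : IsBourgainSystem B d)
    (hd : 0 ≤ d) {η : ℝ} (hη : 0 < η) (hη1 : η < 1) (hdη : d * η ≤ 1 / 8) :
    (#(B 1) - #(B (1 - η)) : ℝ) ≤ 8 * d * η * #(B 1) := by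
  have hC := hB.card_pos (ρ := 1 - η) (by linarith) (by linarith)
  have hCA : (#(B (1 - η)) : ℝ) ≤ #(B 1) :=
    mod_cast card_le_card (hB.1 1 (1 - η) (by linarith) (by linarith) one_le_two)
  have h := (hreg (-η) (by rwa [abs_neg, abs_of_pos hη])).2
  rw [abs_neg, abs_of_pos hη, ← sub_eq_add_neg, div_le_iff₀ hC] at h
  nlinarith [mul_le_mul_of_nonneg_left hCA (by positivity : 0 ≤ 8 * d * η)]

end BourgainSystem

/-- For a regular Bourgain system of dimension `d` with uniform measure `β` on `B₁` and
`κ > 0`: if a character `γ` has `|β̂(γ)| ≥ κ`, then `|1 - γ(x)| ≤ 2⁴ d κ⁻¹ η` for all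
`x ∈ B_η`. -/
theorem stmt10 {G : Type*} [AddCommGroup G] [Fintype G] (B : ℝ → Finset G) (d : ℝ)
    (hd : 1 ≤ d) (hB : IsBourgainSystem B d) (hreg : IsRegularBS B d)
    (κ : ℝ) (hκ : 0 < κ) (γ : AddChar G ℂ)
    (hγ : κ ≤ ‖(∑ u ∈ B 1, (starRingEnd ℂ) (γ u)) / ((B 1).card : ℂ)‖) :
    ∀ η : ℝ, 0 < η → η ≤ 2 → ∀ x ∈ B η,
      ‖1 - γ x‖ ≤ 2 ^ 4 * d * κ⁻¹ * η := by
  classical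
  intro η hη hη2 x hx
  have hA := hB.card_pos one_pos one_le_two
  have hT : κ * #(B 1) ≤ ‖∑ u ∈ B 1, conj (γ u)‖ := by
    rwa [norm_div, Complex.norm_natCast, le_div_iff₀ hA] at hγ
  rw [mul_right_comm, ← div_eq_mul_inv, le_div_iff₀ hκ]
  rcases le_or_gt (d * η) (1 / 8) with hdη | hdη
  · have hη1 : η < 1 := by nlinarith
    have hshift := γ.norm_one_sub_mul_norm_sum_conj_le
      (hB.1 1 (1 - η) (by linarith) (by linarith) one_le_two)
      (hB.subset_image_add_right hη hη1 hx)
    have hcard := hreg.card_sub_le hB (by linarith) hη hη1 hdη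
    refine le_of_mul_le_mul_right ?_ hA
    calc ‖1 - γ x‖ * κ * #(B 1) ≤ ‖1 - γ x‖ * ‖∑ u ∈ B 1, conj (γ u)‖ := by
          rw [mul_assoc]; gcongr
      _ ≤ 2 ^ 4 * d * η * #(B 1) := by linarith
  · have hκ1 : κ ≤ 1 :=
      le_of_mul_le_mul_right (by linarith [γ.norm_sum_conj_le_card (B 1)]) hA
    have h2 : ‖1 - γ x‖ ≤ 2 := by
      simpa [γ.norm_apply, one_add_one_eq_two] using norm_sub_le (1 : ℂ) (γ x)
    nlinarith [norm_nonneg (1 - γ x)]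
end

section
/- (Cotlar's almost orthogonality lemma) If v and (w_j)_{j∈J} (J finite) are elements of a complex inner product space, then ∑_j |⟨v, w_j⟩|² ≤ ⟨v, v⟩ · max_j ∑_i |⟨w_i, w_j⟩|. -/
open Finset

/-!
Put `a j = ⟪v, w j⟫` and `u = ∑ j, conj (a j) • w j`, so that `⟪v, u⟫ = S := ∑ j, |a j|²`.
Expanding `‖u‖²` and bounding `|a i| |a j| ≤ (|a i|² + |a j|²) / 2` (Schur's test) gives
`‖u‖² ≤ S M`, where `M` is the largest column sum of `|⟪w i, w j⟫|`. Cauchy–Schwarz then yields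
`S² ≤ ‖v‖² ‖u‖² ≤ ‖v‖² S M`, i.e. `S ≤ ‖v‖² M`.
-/

section SchurTest

variable {ι : Type*} [Fintype ι]

theorem sum_sum_mul_mul_le_of_symm (x : ι → ℝ) (K : ι → ι → ℝ) (hK : ∀ i j, 0 ≤ K i j)
    (hsymm : ∀ i j, K i j = K j i) :
    ∑ i, ∑ j, x i * x j * K i j ≤ ∑ j, x j ^ 2 * ∑ i, K i j := by
  have h_fst : ∑ i, ∑ j, x i ^ 2 * K i j = ∑ j, x j ^ 2 * ∑ i, K i j := by
    simp_rw [mul_sum]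
    exact sum_congr rfl fun i _ => sum_congr rfl fun j _ => by rw [hsymm]
  have h_snd : ∑ i, ∑ j, x j ^ 2 * K i j = ∑ j, x j ^ 2 * ∑ i, K i j := by
    simp_rw [mul_sum]
    exact sum_comm
  calc ∑ i, ∑ j, x i * x j * K i j
      ≤ ∑ i, ∑ j, (x i ^ 2 / 2 + x j ^ 2 / 2) * K i j := by
        gcongr with i _ j _
        · exact hK i j
        · nlinarith [sq_nonneg (x i - x j)]
    _ = (∑ i, ∑ j, x i ^ 2 * K i j + ∑ i, ∑ j, x j ^ 2 * K i j) / 2 := by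
        simp_rw [← sum_add_distrib, sum_div]
        congr! 2
        ring
    _ = ∑ j, x j ^ 2 * ∑ i, K i j := by
        rw [h_fst, h_snd]
        ring

theorem sum_sum_mul_mul_le_of_symm_of_le (x : ι → ℝ) (K : ι → ι → ℝ) (hK : ∀ i j, 0 ≤ K i j)
    (hsymm : ∀ i j, K i j = K j i) {M : ℝ} (hM : ∀ j, ∑ i, K i j ≤ M) :
    ∑ i, ∑ j, x i * x j * K i j ≤ (∑ j, x j ^ 2) * M := by
  refine (sum_sum_mul_mul_le_of_symm x K hK hsymm).trans ?_
  rw [sum_mul]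
  gcongr with j _
  exact hM j

end SchurTest

section InnerProductSpace

variable {𝕜 V ι : Type*} [RCLike 𝕜] [NormedAddCommGroup V] [InnerProductSpace 𝕜 V]
  [Fintype ι]

theorem norm_sum_smul_sq_le_sum_sum (c : ι → 𝕜) (w : ι → V) :
    ‖∑ j, c j • w j‖ ^ 2 ≤ ∑ i, ∑ j, ‖c i‖ * ‖c j‖ * ‖(inner 𝕜 (w i) (w j) : 𝕜)‖ := by
  have hexpand : (inner 𝕜 (∑ i, c i • w i) (∑ j, c j • w j) : 𝕜) =
      ∑ i, ∑ j, (starRingEnd 𝕜) (c i) * c j * inner 𝕜 (w i) (w j) := by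
    simp_rw [sum_inner, inner_sum, inner_smul_left, inner_smul_right, mul_assoc]
  calc ‖∑ j, c j • w j‖ ^ 2
      = RCLike.re (inner 𝕜 (∑ j, c j • w j) (∑ j, c j • w j) : 𝕜) :=
        (inner_self_eq_norm_sq _).symm
    _ ≤ ‖(inner 𝕜 (∑ j, c j • w j) (∑ j, c j • w j) : 𝕜)‖ := RCLike.re_le_norm _
    _ ≤ ∑ i, ∑ j, ‖c i‖ * ‖c j‖ * ‖(inner 𝕜 (w i) (w j) : 𝕜)‖ := by
        rw [hexpand]
        refine (norm_sum_le _ _).trans (sum_le_sum fun i _ => ?_)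
        refine (norm_sum_le _ _).trans (sum_le_sum fun j _ => ?_)
        simp only [norm_mul, RCLike.norm_conj, le_refl]

theorem norm_sum_smul_sq_le {M : ℝ} (c : ι → 𝕜) (w : ι → V)
    (hM : ∀ j, ∑ i, ‖(inner 𝕜 (w i) (w j) : 𝕜)‖ ≤ M) :
    ‖∑ j, c j • w j‖ ^ 2 ≤ (∑ j, ‖c j‖ ^ 2) * M :=
  (norm_sum_smul_sq_le_sum_sum c w).trans <|
    sum_sum_mul_mul_le_of_symm_of_le (fun j => ‖c j‖) _ (fun _ _ => norm_nonneg _)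
      (fun i j => norm_inner_symm (w i) (w j)) hM

theorem sum_norm_inner_sq_le [Nonempty ι] {M : ℝ} (v : V) (w : ι → V)
    (hM : ∀ j, ∑ i, ‖(inner 𝕜 (w i) (w j) : 𝕜)‖ ≤ M) :
    ∑ j, ‖(inner 𝕜 v (w j) : 𝕜)‖ ^ 2 ≤ ‖v‖ ^ 2 * M := by
  set a : ι → 𝕜 := fun j => inner 𝕜 v (w j)
  set S := ∑ j, ‖a j‖ ^ 2
  set u := ∑ j, (starRingEnd 𝕜) (a j) • w j
  have hvu : (inner 𝕜 v u : 𝕜) = S := by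
    simp only [u, S, inner_sum, inner_smul_right, RCLike.ofReal_sum, RCLike.ofReal_pow]
    exact sum_congr rfl fun j _ => RCLike.conj_mul (a j)
  have hS : S ≤ ‖v‖ * ‖u‖ := by
    calc S ≤ ‖(inner 𝕜 v u : 𝕜)‖ := by
          rw [hvu, RCLike.norm_ofReal]
          exact le_abs_self S
      _ ≤ ‖v‖ * ‖u‖ := norm_inner_le_norm v u
  have hu : ‖u‖ ^ 2 ≤ S * M := by
    simpa only [RCLike.norm_conj] using
      norm_sum_smul_sq_le (fun j => (starRingEnd 𝕜) (a j)) w hM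
  have hS0 : 0 ≤ S := by positivity
  rcases hS0.eq_or_lt with hS_zero | hS_pos
  · rw [← hS_zero]
    obtain ⟨j⟩ := ‹Nonempty ι›
    have : 0 ≤ M := (sum_nonneg fun i _ => norm_nonneg _).trans (hM j)
    positivity
  · have : S * S ≤ S * (‖v‖ ^ 2 * M) := by
      calc S * S ≤ (‖v‖ * ‖u‖) * (‖v‖ * ‖u‖) := mul_self_le_mul_self hS0 hS
        _ = ‖v‖ ^ 2 * ‖u‖ ^ 2 := by ring
        _ ≤ ‖v‖ ^ 2 * (S * M) := by gcongr
        _ = S * (‖v‖ ^ 2 * M) := by ring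
    exact le_of_mul_le_mul_left this hS_pos

end InnerProductSpace

/-- Cotlar's almost orthogonality lemma: for `v` and a finite family `(w_j)` in a complex
inner product space, `∑_j |⟨v, w_j⟩|² ≤ ⟨v,v⟩ ⬝ max_j ∑_i |⟨w_i, w_j⟩|`. -/
theorem stmt11 {V : Type*} [NormedAddCommGroup V] [InnerProductSpace ℂ V]
    {J : Type*} [Fintype J] [Nonempty J] (v : V) (w : J → V) :
    ∑ j : J, ‖(inner ℂ v (w j) : ℂ)‖ ^ 2 ≤
      (inner ℂ v v : ℂ).re *
        Finset.univ.sup' Finset.univ_nonempty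
          (fun j => ∑ i : J, ‖(inner ℂ (w i) (w j) : ℂ)‖) := by
  rw [← RCLike.re_to_complex, inner_self_eq_norm_sq]
  exact sum_norm_inner_sq_le v w fun j =>
    le_sup' (fun j => ∑ i : J, ‖(inner ℂ (w i) (w j) : ℂ)‖) (mem_univ j)
end

section
/- (Chang's theorem) If A ⊆ G is a subset of a finite abelian group with density α := |A|/|G| > 0 and ε ∈ (0,1], and Λ := {γ ∈ Ĝ : |1̂_A(γ)| ≥ εα}, then there is a set Γ ⊆ Ĝ with |Γ| ≤ 2ε⁻² log α⁻¹ such that Λ ⊆ ⟨Γ⟩ := {∑_{λ∈Γ} σ_λ λ : σ ∈ {−1,0,1}^Γ}. -/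
/-!
Maximal dissociated subsets of the spectrum `Λ` span it, so it suffices to bound the size of a
dissociated `Γ ⊆ Λ`. Let `w_γ` be the phase of `1̂_A(γ)` and
`f x = ∑_{γ ∈ Γ} Re (w_γ γ(x))`, so that `f` has mean at least `|Γ| ε` on `A`. By Jensen,
`exp (ε² |Γ|) ≤ 𝔼_A exp (ε f) ≤ α⁻¹ 𝔼_G exp (ε f)`. Bounding `exp (ε t) ≤ cosh ε + t sinh ε` for
`|t| ≤ 1` turns `exp (ε f)` into a product over `Γ`, whose average over `G` is `cosh ε ^ |Γ|`
because `Γ` is dissociated. With `cosh ε ≤ exp (ε² / 2)` this gives `exp (ε² |Γ| / 2) ≤ α⁻¹`.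
-/

open Finset
open scoped ComplexConjugate

lemma Real.exp_sum_div_card_le {ι : Type*} {s : Finset ι} (hs : s.Nonempty) (f : ι → ℝ) :
    Real.exp ((∑ i ∈ s, f i) / #s) ≤ (∑ i ∈ s, Real.exp (f i)) / #s := by
  have hcard : (0 : ℝ) < #s := by exact_mod_cast hs.card_pos
  have h := convexOn_exp.map_sum_le (t := s) (w := fun _ ↦ (#s : ℝ)⁻¹) (p := f)
    (fun _ _ ↦ by positivity) (by simp [hcard.ne']) (fun _ _ ↦ Set.mem_univ _)
  simp only [smul_eq_mul] at h
  rwa [← mul_sum, ← mul_sum, inv_mul_eq_div, inv_mul_eq_div] at h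

lemma Complex.div_norm_mul_conj (z : ℂ) : z / ‖z‖ * conj z = ‖z‖ := by
  rcases eq_or_ne z 0 with rfl | hz
  · simp
  rw [div_mul_eq_mul_div, mul_conj, normSq_eq_norm_sq]
  have : (‖z‖ : ℂ) ≠ 0 := by simpa using hz
  push_cast
  field_simp

lemma Complex.norm_div_norm_le_one (z : ℂ) : ‖z / ‖z‖‖ ≤ 1 := by
  rw [norm_div, Complex.norm_real, norm_norm]
  exact div_self_le_one _

namespace AddDissociated

variable {G : Type*} [AddCommGroup G] [Fintype G] {Γ : Finset (AddChar G ℂ)}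

lemma sum_prod_add_re (hΓ : AddDissociated (Γ : Set (AddChar G ℂ))) (c : ℝ)
    (w : AddChar G ℂ → ℂ) :
    ∑ x, ∏ γ ∈ Γ, (c + (w γ * γ x).re) = Fintype.card G * c ^ #Γ := by
  classical
  have hsupp : {ψ | (if ψ ∈ Γ then w ψ else 0) ≠ 0} ⊆ (Γ : Set (AddChar G ℂ)) := by
    intro ψ hψ
    by_contra h
    simp_all
  have h := (hΓ.subset hsupp).randomisation (fun ψ ↦ if ψ ∈ Γ then c else 1) _
  have hterm : ∀ x (ψ : AddChar G ℂ), ((if ψ ∈ Γ then c else 1) +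
      ((if ψ ∈ Γ then w ψ else 0) * ψ x).re) = if ψ ∈ Γ then c + (w ψ * ψ x).re else 1 := by
    intro x ψ
    split_ifs <;> simp
  simp only [hterm, Fintype.prod_ite_mem, prod_const, Fintype.expect_eq_sum_div_card] at h
  rw [← h]
  field_simp

lemma sum_exp_sum_re_le (hΓ : AddDissociated (Γ : Set (AddChar G ℂ))) {w : AddChar G ℂ → ℂ}
    (hw : ∀ γ ∈ Γ, ‖w γ‖ ≤ 1) (ε : ℝ) :
    ∑ x, Real.exp (ε * ∑ γ ∈ Γ, (w γ * γ x).re) ≤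
      Fintype.card G * Real.exp (#Γ * ε ^ 2 / 2) := by
  have hre : ∀ x, ∀ γ ∈ Γ, |(w γ * γ x).re| ≤ 1 := fun x γ hγ ↦
    (Complex.abs_re_le_norm _).trans <| by rw [norm_mul, AddChar.norm_apply, mul_one]; exact hw γ hγ
  calc ∑ x, Real.exp (ε * ∑ γ ∈ Γ, (w γ * γ x).re)
      = ∑ x, ∏ γ ∈ Γ, Real.exp (ε * (w γ * γ x).re) := by simp only [mul_sum, Real.exp_sum]
    _ ≤ ∑ x, ∏ γ ∈ Γ, (Real.cosh ε + (Real.sinh ε * w γ * γ x).re) := by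
        gcongr with x _ γ hγ
        rw [mul_assoc, Complex.re_ofReal_mul, mul_comm (Real.sinh ε), mul_comm ε]
        exact Real.exp_mul_le_cosh_add_mul_sinh (hre x γ hγ) ε
    _ = Fintype.card G * Real.cosh ε ^ #Γ := by
        simpa only [mul_assoc] using hΓ.sum_prod_add_re (Real.cosh ε) (fun γ ↦ Real.sinh ε * w γ)
    _ ≤ Fintype.card G * Real.exp (ε ^ 2 / 2) ^ #Γ := by
        gcongr
        exact Real.cosh_le_exp_half_sq ε
    _ = Fintype.card G * Real.exp (#Γ * ε ^ 2 / 2) := by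
        rw [← Real.exp_nat_mul, mul_div_assoc]

lemma card_mul_sq_div_two_le_log (hΓ : AddDissociated (Γ : Set (AddChar G ℂ))) {A : Finset G}
    (hA : A.Nonempty) {ε : ℝ} (hε : 0 ≤ ε)
    (hΓA : ∀ γ ∈ Γ, ε * #A ≤ ‖∑ x ∈ A, conj (γ x)‖) :
    #Γ * ε ^ 2 / 2 ≤ Real.log (Fintype.card G / #A) := by
  set ν : AddChar G ℂ → ℂ := fun γ ↦ ∑ x ∈ A, conj (γ x)
  set f : G → ℝ := fun x ↦ ∑ γ ∈ Γ, (ν γ / ‖ν γ‖ * γ x).re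
  have hA₀ : (0 : ℝ) < #A := by exact_mod_cast hA.card_pos
  have hmean : #Γ * ε ^ 2 ≤ (∑ x ∈ A, ε * f x) / #A := by
    have hphase : ∀ γ, ∑ x ∈ A, (ν γ / ‖ν γ‖ * γ x).re = ‖ν γ‖ := fun γ ↦ by
      have : ∑ x ∈ A, γ x = conj (ν γ) := by simp [ν, map_sum]
      rw [← Complex.re_sum, ← mul_sum, this, Complex.div_norm_mul_conj, Complex.ofReal_re]
    have : #Γ * (ε * #A) ≤ ∑ x ∈ A, f x := by
      rw [sum_comm]
      simp only [hphase]
      simpa using sum_le_sum hΓA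
    rw [le_div_iff₀ hA₀, ← mul_sum]
    nlinarith
  have hjensen := Real.exp_sum_div_card_le hA (fun x ↦ ε * f x)
  have hmoment := hΓ.sum_exp_sum_re_le (fun γ _ ↦ Complex.norm_div_norm_le_one (ν γ)) ε
  have hsub : ∑ x ∈ A, Real.exp (ε * f x) ≤ ∑ x, Real.exp (ε * f x) :=
    sum_le_univ_sum_of_nonneg fun _ ↦ (Real.exp_pos _).le
  have : Real.exp (#Γ * ε ^ 2 / 2) * Real.exp (#Γ * ε ^ 2 / 2) ≤
      Fintype.card G / #A * Real.exp (#Γ * ε ^ 2 / 2) := by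
    rw [← Real.exp_add, add_halves]
    calc Real.exp (#Γ * ε ^ 2) ≤ (∑ x ∈ A, Real.exp (ε * f x)) / #A :=
          (Real.exp_le_exp.2 hmean).trans hjensen
      _ ≤ Fintype.card G * Real.exp (#Γ * ε ^ 2 / 2) / #A := by gcongr; exact hsub.trans hmoment
      _ = _ := by ring
  exact (Real.le_log_iff_exp_le (by positivity)).2 (le_of_mul_le_mul_right this (Real.exp_pos _))

lemma card_le_two_mul_inv_sq_mul_log (hΓ : AddDissociated (Γ : Set (AddChar G ℂ)))
    {A : Finset G} (hA : A.Nonempty) {ε : ℝ} (hε : 0 < ε)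
    (hΓA : ∀ γ ∈ Γ, ε * (#A / Fintype.card G) ≤
      ‖(∑ x ∈ A, conj (γ x)) / (Fintype.card G : ℂ)‖) :
    (#Γ : ℝ) ≤ 2 * ε⁻¹ ^ 2 * Real.log (#A / Fintype.card G)⁻¹ := by
  have hG : (0 : ℝ) < Fintype.card G := by exact_mod_cast Fintype.card_pos
  have hlog := hΓ.card_mul_sq_div_two_le_log hA hε.le fun γ hγ ↦ by
    have := hΓA γ hγ
    rwa [norm_div, Complex.norm_natCast, ← mul_div_assoc, div_le_div_iff_of_pos_right hG] at this
  calc (#Γ : ℝ) = 2 * ε⁻¹ ^ 2 * (#Γ * ε ^ 2 / 2) := by field_simp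
    _ ≤ 2 * ε⁻¹ ^ 2 * Real.log (#A / Fintype.card G)⁻¹ := by rw [inv_div]; gcongr

end AddDissociated

theorem stmt13_general {G : Type*} [AddCommGroup G] [Fintype G] (A : Finset G) (ε α : ℝ)
    (hα : α = (A.card : ℝ) / (Fintype.card G : ℝ)) (hpos : 0 < α)
    (hε : 0 < ε) :
    ∃ Γ : Finset (AddChar G ℂ), (Γ.card : ℝ) ≤ 2 * ε⁻¹ ^ 2 * Real.log α⁻¹ ∧
      ∀ γ : AddChar G ℂ,
        ε * α ≤ ‖(∑ x ∈ A, (starRingEnd ℂ) (γ x)) / (Fintype.card G : ℂ)‖ →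
        ∃ σ : AddChar G ℂ → ℤ, (∀ lam, σ lam = -1 ∨ σ lam = 0 ∨ σ lam = 1) ∧
          ∀ x : G, γ x = ∏ lam ∈ Γ, lam x ^ σ lam := by
  have hA : A.Nonempty := by
    rw [nonempty_iff_ne_empty]
    rintro rfl
    simp [hα] at hpos
  have hα₁ : α ≤ 1 := by
    rw [hα]
    exact div_le_one_of_le₀ (by exact_mod_cast card_le_univ A) (Nat.cast_nonneg _)
  have hB : 0 ≤ 2 * ε⁻¹ ^ 2 * Real.log α⁻¹ := by
    have := Real.log_nonneg ((one_le_inv₀ hpos).2 hα₁)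
    positivity
  obtain ⟨Γ, -, hΓ, hspan⟩ := exists_subset_addSpan_card_le_of_forall_addDissociated
    (s := univ.filter fun γ : AddChar G ℂ ↦
      ε * α ≤ ‖(∑ x ∈ A, conj (γ x)) / (Fintype.card G : ℂ)‖)
    (d := ⌊2 * ε⁻¹ ^ 2 * Real.log α⁻¹⌋₊) fun Γ' hΓ' hdis ↦ Nat.le_floor <| by
      subst hα
      exact hdis.card_le_two_mul_inv_sq_mul_log hA hε fun γ hγ ↦ (mem_filter.1 (hΓ' hγ)).2
  refine ⟨Γ, (Nat.cast_le.2 hΓ).trans (Nat.floor_le hB), fun γ hγ ↦ ?_⟩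
  obtain ⟨σ, hσ, hσγ⟩ := mem_addSpan.1 (hspan (mem_filter.2 ⟨mem_univ _, hγ⟩))
  exact ⟨σ, hσ, fun x ↦ by simp [← hσγ, AddChar.sum_apply, AddChar.zsmul_apply]⟩

/-- Chang's theorem: if `A ⊆ G` has density `α > 0` and
`Λ = {γ : |1̂_A(γ)| ≥ εα}`, then there is `Γ` with `|Γ| ≤ 2ε⁻² log α⁻¹` such that every
`γ ∈ Λ` is a `{-1,0,1}`-signed combination of elements of `Γ`. -/
theorem stmt13 {G : Type*} [AddCommGroup G] [Fintype G] (A : Finset G) (ε α : ℝ)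
    (hα : α = (A.card : ℝ) / (Fintype.card G : ℝ)) (hpos : 0 < α)
    (hε : 0 < ε) (hε1 : ε ≤ 1) :
    ∃ Γ : Finset (AddChar G ℂ), (Γ.card : ℝ) ≤ 2 * ε⁻¹ ^ 2 * Real.log α⁻¹ ∧
      ∀ γ : AddChar G ℂ,
        ε * α ≤ ‖(∑ x ∈ A, (starRingEnd ℂ) (γ x)) / (Fintype.card G : ℂ)‖ →
        ∃ σ : AddChar G ℂ → ℤ, (∀ lam, σ lam = -1 ∨ σ lam = 0 ∨ σ lam = 1) ∧
          ∀ x : G, γ x = ∏ lam ∈ Γ, lam x ^ σ lam :=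
  stmt13_general A ε α hα hpos hε
end

section
/- (Local Bessel inequality, cardinality bound) Let B be a regular Bourgain system on a finite abelian group G with uniform measure β on B₁, let f : G → ℂ with L_f := ‖f‖_{L²(β)} / ‖f‖_{L¹(β)}, and let ε ∈ (0,1]. If Λ ⊆ Δ := {γ ∈ Ĝ : |(f dβ)^(γ)| ≥ ε‖f‖_{L¹(β)}} is such that λ − λ' ∉ S := {γ : |β̂(γ)| ≥ ε²L_f⁻²/2} for all distinct λ, λ' ∈ Λ, then |Λ| ≤ 2ε⁻²L_f². -/
/-!
Take `v = f` and `w_γ = γ` in `ℓ²(B₁)`. Testing `v` against `g = ∑ ⟪w_γ, v⟫ w_γ` gives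
`(∑ |⟪w_γ, v⟫|²)² ≤ ‖v‖² ‖g‖²`, and since `|w_γ| = 1` pointwise while distinct characters of `Λ`
are `δ`-almost orthogonal (`δ = ε² L_f⁻² / 2`), `‖g‖² ≤ (1 + δ |Λ|) ∑ |⟪w_γ, v⟫|²` after normalising.
This is the local Bessel inequality `∑_{γ ∈ Λ} |(f dβ)^(γ)|² ≤ ‖f‖²_{L²(β)} (1 + δ |Λ|)`. Every
term on the left is at least `ε² ‖f‖²_{L¹(β)}`, and `δ ‖f‖²_{L²(β)} = ε² ‖f‖²_{L¹(β)} / 2`, so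
`|Λ| ε² ‖f‖²_{L¹(β)} / 2 ≤ ‖f‖²_{L²(β)}`.
-/

open Finset

open scoped InnerProductSpace ComplexConjugate

section AlmostOrthogonality

variable {𝕜 E ι : Type*} [RCLike 𝕜] [NormedAddCommGroup E] [InnerProductSpace 𝕜 E]

theorem norm_sum_smul_sq_le_s19 (s : Finset ι) (a : ι → 𝕜) (w : ι → E) :
    ‖∑ i ∈ s, a i • w i‖ ^ 2 ≤ ∑ i ∈ s, ∑ j ∈ s, ‖a i‖ * ‖a j‖ * ‖⟪w i, w j⟫_𝕜‖ := by
  rw [← inner_self_eq_norm_sq (𝕜 := 𝕜), inner_self_re_eq_norm, sum_inner]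
  simp only [inner_smul_left, inner_sum, inner_smul_right]
  refine (norm_sum_le _ _).trans <| sum_le_sum fun i _ => (norm_sum_le _ _).trans_eq ?_
  exact sum_congr rfl fun j _ => by simp only [norm_mul, RCLike.norm_conj]; ring

theorem sum_norm_inner_sq_sq_le (s : Finset ι) (w : ι → E) (v : E) :
    (∑ i ∈ s, ‖⟪w i, v⟫_𝕜‖ ^ 2) ^ 2 ≤ ‖v‖ ^ 2 * ‖∑ i ∈ s, ⟪w i, v⟫_𝕜 • w i‖ ^ 2 := by
  set g := ∑ i ∈ s, ⟪w i, v⟫_𝕜 • w i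
  have hdual : ⟪g, v⟫_𝕜 = ((∑ i ∈ s, ‖⟪w i, v⟫_𝕜‖ ^ 2 : ℝ) : 𝕜) := by
    simp only [g, sum_inner, inner_smul_left, RCLike.conj_mul]
    push_cast
    rfl
  have hT : ∑ i ∈ s, ‖⟪w i, v⟫_𝕜‖ ^ 2 ≤ ‖g‖ * ‖v‖ := by
    have := norm_inner_le_norm (𝕜 := 𝕜) g v
    rwa [hdual, RCLike.norm_ofReal, abs_of_nonneg (by positivity)] at this
  calc (∑ i ∈ s, ‖⟪w i, v⟫_𝕜‖ ^ 2) ^ 2 ≤ (‖g‖ * ‖v‖) ^ 2 := by gcongr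
    _ = ‖v‖ ^ 2 * ‖g‖ ^ 2 := by ring

theorem sum_norm_inner_sq_le_of_almost_orthogonal (s : Finset ι) (w : ι → E) (v : E)
    {A δ : ℝ} (hA : 0 ≤ A) (hδ : 0 ≤ δ) (hdiag : ∀ i ∈ s, ‖w i‖ ^ 2 ≤ A)
    (hoff : ∀ i ∈ s, ∀ j ∈ s, i ≠ j → ‖⟪w i, w j⟫_𝕜‖ ≤ δ) :
    ∑ i ∈ s, ‖⟪w i, v⟫_𝕜‖ ^ 2 ≤ ‖v‖ ^ 2 * (A + δ * #s) := by
  classical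
  set a : ι → ℝ := fun i => ‖⟪w i, v⟫_𝕜‖
  set T := ∑ i ∈ s, a i ^ 2
  have hentry : ∀ i ∈ s, ∀ j ∈ s, ‖⟪w i, w j⟫_𝕜‖ ≤ (if i = j then A else 0) + δ := by
    intro i hi j hj
    split_ifs with hij
    · subst hij
      rw [← inner_self_re_eq_norm, inner_self_eq_norm_sq]
      linarith [hdiag i hi]
    · simpa using hoff i hi j hj hij
  have hg : ‖∑ i ∈ s, ⟪w i, v⟫_𝕜 • w i‖ ^ 2 ≤ A * T + δ * (∑ i ∈ s, a i) ^ 2 :=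
    calc ‖∑ i ∈ s, ⟪w i, v⟫_𝕜 • w i‖ ^ 2
        ≤ ∑ i ∈ s, ∑ j ∈ s, a i * a j * ‖⟪w i, w j⟫_𝕜‖ := norm_sum_smul_sq_le_s19 s _ w
      _ ≤ ∑ i ∈ s, ∑ j ∈ s, a i * a j * ((if i = j then A else 0) + δ) := by
        gcongr with i hi j hj
        exact hentry i hi j hj
      _ = ∑ i ∈ s, (A * a i ^ 2 + δ * ∑ j ∈ s, a i * a j) := sum_congr rfl fun i hi => by
        simp only [mul_add, sum_add_distrib, mul_ite, mul_zero, sum_ite_eq, if_pos hi, ← sum_mul]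
        ring
      _ = A * T + δ * (∑ i ∈ s, a i) ^ 2 := by
        rw [sum_add_distrib, ← mul_sum, ← mul_sum, sq, sum_mul_sum]
  have hsq : (∑ i ∈ s, a i) ^ 2 ≤ #s * T := sq_sum_le_card_mul_sum_sq
  have hT2 : T * T ≤ T * (‖v‖ ^ 2 * (A + δ * #s)) :=
    calc T * T = T ^ 2 := (sq T).symm
      _ ≤ ‖v‖ ^ 2 * (A * T + δ * (#s * T)) := by
          refine (sum_norm_inner_sq_sq_le s w v).trans ?_
          gcongr
          exact hg.trans (by gcongr)
      _ = T * (‖v‖ ^ 2 * (A + δ * #s)) := by ring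
  rcases (show 0 ≤ T from sum_nonneg fun i _ => sq_nonneg (a i)).eq_or_lt with hT0 | hTpos
  · rw [← hT0]; positivity
  · exact le_of_mul_le_mul_left hT2 hTpos

end AlmostOrthogonality

section FiniteSupport

variable {α 𝕜 : Type*} [RCLike 𝕜]

/-- `φ` restricted to `s`, in `ℓ²(s)` with counting measure; the normalisation of `L²(β)` by `#s`
is applied only at the end. -/
noncomputable def toEuclideanOn (s : Finset α) (φ : α → 𝕜) : EuclideanSpace 𝕜 s :=
  WithLp.toLp 2 fun u => φ u

theorem inner_toEuclideanOn (s : Finset α) (φ ψ : α → 𝕜) :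
    ⟪toEuclideanOn s φ, toEuclideanOn s ψ⟫_𝕜 = ∑ u ∈ s, conj (φ u) * ψ u := by
  rw [PiLp.inner_apply, ← sum_coe_sort s]
  exact sum_congr rfl fun u _ => by rw [RCLike.inner_apply, mul_comm]; rfl

theorem norm_toEuclideanOn_sq (s : Finset α) (φ : α → 𝕜) :
    ‖toEuclideanOn s φ‖ ^ 2 = ∑ u ∈ s, ‖φ u‖ ^ 2 := by
  rw [EuclideanSpace.norm_sq_eq, ← sum_coe_sort s]
  rfl

end FiniteSupport

theorem sum_norm_fourierCoeff_sq_le {G : Type*} [AddGroup G] [Finite G] (s : Finset G)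
    (f : G → ℂ) (Λ : Finset (AddChar G ℂ)) {δ : ℝ} (hδ : 0 ≤ δ)
    (hsep : ∀ γ ∈ Λ, ∀ γ' ∈ Λ, γ ≠ γ' → ‖(∑ u ∈ s, γ u * conj (γ' u)) / #s‖ ≤ δ) :
    ∑ γ ∈ Λ, ‖(∑ u ∈ s, f u * conj (γ u)) / #s‖ ^ 2
      ≤ (∑ u ∈ s, ‖f u‖ ^ 2) / #s * (1 + δ * #Λ) := by
  rcases s.eq_empty_or_nonempty with rfl | hs
  · simp
  have hN : (0 : ℝ) < #s := by exact_mod_cast hs.card_pos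
  have hdiag : ∀ γ ∈ Λ, ‖toEuclideanOn s γ‖ ^ 2 ≤ #s := fun γ _ => by
    simp [norm_toEuclideanOn_sq, AddChar.norm_apply]
  have hoff : ∀ γ ∈ Λ, ∀ γ' ∈ Λ, γ ≠ γ' →
      ‖⟪toEuclideanOn s γ, toEuclideanOn s γ'⟫_ℂ‖ ≤ #s * δ := by
    intro γ hγ γ' hγ' hne
    have h := hsep γ hγ γ' hγ' hne
    rw [norm_div, Complex.norm_natCast, div_le_iff₀ hN] at h
    rw [inner_toEuclideanOn, ← RCLike.norm_conj, map_sum]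
    simpa only [map_mul, RCLike.conj_conj, mul_comm _ δ] using h
  have := sum_norm_inner_sq_le_of_almost_orthogonal Λ (fun γ => toEuclideanOn s γ)
    (toEuclideanOn s f) hN.le (by positivity) hdiag hoff
  simp only [inner_toEuclideanOn, norm_toEuclideanOn_sq] at this
  calc ∑ γ ∈ Λ, ‖(∑ u ∈ s, f u * conj (γ u)) / #s‖ ^ 2
      = (∑ γ ∈ Λ, ‖∑ u ∈ s, conj (γ u) * f u‖ ^ 2) / #s ^ 2 := by
        simp only [norm_div, div_pow, Complex.norm_natCast, ← sum_div, mul_comm (f _)]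
    _ ≤ (∑ u ∈ s, ‖f u‖ ^ 2) * (#s + #s * δ * #Λ) / #s ^ 2 := by gcongr
    _ = (∑ u ∈ s, ‖f u‖ ^ 2) / #s * (1 + δ * #Λ) := by field_simp

theorem sum_div_card_le_sqrt_sum_sq_div_card {α : Type*} (s : Finset α) (x : α → ℝ) :
    (∑ u ∈ s, x u) / #s ≤ √((∑ u ∈ s, x u ^ 2) / #s) := by
  refine Real.le_sqrt_of_sq_le ?_
  rcases s.eq_empty_or_nonempty with rfl | hs
  · simp
  have hN : (0 : ℝ) < #s := by exact_mod_cast hs.card_pos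
  rw [div_pow, div_le_div_iff₀ (by positivity) hN, sq (#s : ℝ), ← mul_assoc]
  exact mul_le_mul_of_nonneg_right (sq_sum_le_card_mul_sum_sq.trans_eq (mul_comm _ _)) hN.le

theorem stmt19_general {G : Type*} [AddCommGroup G] [Fintype G] (B : ℝ → Finset G)
    (f : G → ℂ) (ε L1 L2 Lf : ℝ)
    (hL1 : L1 = (∑ u ∈ B 1, ‖f u‖) / ((B 1).card : ℝ))
    (hL2 : L2 = Real.sqrt ((∑ u ∈ B 1, ‖f u‖ ^ 2) / ((B 1).card : ℝ)))
    (hLf : Lf = L2 / L1) (hL1pos : 0 < L1) (hε : 0 < ε)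
    (Λ : Finset (AddChar G ℂ))
    (hΔ : ∀ lam ∈ Λ,
      ε * L1 ≤ ‖(∑ u ∈ B 1, f u * (starRingEnd ℂ) (lam u)) / ((B 1).card : ℂ)‖)
    (hsep : ∀ lam ∈ Λ, ∀ lam' ∈ Λ, lam ≠ lam' →
      ‖(∑ u ∈ B 1, lam u * (starRingEnd ℂ) (lam' u)) / ((B 1).card : ℂ)‖
        < ε ^ 2 * Lf⁻¹ ^ 2 / 2) :
    (Λ.card : ℝ) ≤ 2 * ε⁻¹ ^ 2 * Lf ^ 2 := by
  have hL2pos : 0 < L2 :=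
    hL1pos.trans_le (hL1 ▸ hL2 ▸ sum_div_card_le_sqrt_sum_sq_div_card _ _)
  have hL2sq : L2 ^ 2 = (∑ u ∈ B 1, ‖f u‖ ^ 2) / #(B 1) := by
    rw [hL2, Real.sq_sqrt (by positivity)]
  have hbessel := sum_norm_fourierCoeff_sq_le (B 1) f Λ (by positivity)
    fun γ hγ γ' hγ' hne => (hsep γ hγ γ' hγ' hne).le
  rw [← hL2sq] at hbessel
  have hlarge : #Λ • (ε * L1) ^ 2 ≤ ∑ γ ∈ Λ, ‖(∑ u ∈ B 1, f u * conj (γ u)) / #(B 1)‖ ^ 2 :=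
    card_nsmul_le_sum _ _ _ fun γ hγ => by gcongr; exact hΔ γ hγ
  have key : (#Λ : ℝ) * (ε * L1) ^ 2 ≤ L2 ^ 2 * (1 + ε ^ 2 * Lf⁻¹ ^ 2 / 2 * #Λ) := by
    rw [← nsmul_eq_mul]
    exact hlarge.trans hbessel
  have hδL2 : ε ^ 2 * Lf⁻¹ ^ 2 / 2 * L2 ^ 2 = (ε * L1) ^ 2 / 2 := by
    rw [hLf]
    field_simp
  have hcount : (#Λ : ℝ) * (ε * L1) ^ 2 ≤ 2 * L2 ^ 2 := by
    linear_combination 2 * key + 2 * (#Λ : ℝ) * hδL2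
  calc (#Λ : ℝ) ≤ 2 * L2 ^ 2 / (ε * L1) ^ 2 := (le_div_iff₀ (by positivity)).2 hcount
    _ = 2 * ε⁻¹ ^ 2 * Lf ^ 2 := by rw [hLf]; field_simp

/-- Local Bessel inequality, cardinality bound: if `Λ ⊆ Δ = {γ : |(f dβ)^(γ)| ≥ ε ‖f‖_{L¹(β)}}`
is such that `λ - λ' ∉ S = {γ : |β̂(γ)| ≥ ε² L_f⁻² / 2}` for all distinct `λ, λ' ∈ Λ`, then
`|Λ| ≤ 2 ε⁻² L_f²`. -/
theorem stmt19 {G : Type*} [AddCommGroup G] [Fintype G] (B : ℝ → Finset G) (d : ℝ)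
    (hd : 1 ≤ d) (hB : IsBourgainSystem B d) (hreg : IsRegularBS B d)
    (f : G → ℂ) (ε L1 L2 Lf : ℝ)
    (hL1 : L1 = (∑ u ∈ B 1, ‖f u‖) / ((B 1).card : ℝ))
    (hL2 : L2 = Real.sqrt ((∑ u ∈ B 1, ‖f u‖ ^ 2) / ((B 1).card : ℝ)))
    (hLf : Lf = L2 / L1) (hL1pos : 0 < L1) (hε : 0 < ε) (hε1 : ε ≤ 1)
    (Λ : Finset (AddChar G ℂ))
    (hΔ : ∀ lam ∈ Λ,
      ε * L1 ≤ ‖(∑ u ∈ B 1, f u * (starRingEnd ℂ) (lam u)) / ((B 1).card : ℂ)‖)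
    (hsep : ∀ lam ∈ Λ, ∀ lam' ∈ Λ, lam ≠ lam' →
      ‖(∑ u ∈ B 1, lam u * (starRingEnd ℂ) (lam' u)) / ((B 1).card : ℂ)‖
        < ε ^ 2 * Lf⁻¹ ^ 2 / 2) :
    (Λ.card : ℝ) ≤ 2 * ε⁻¹ ^ 2 * Lf ^ 2 :=
  stmt19_general B f ε L1 L2 Lf hL1 hL2 hLf hL1pos hε Λ hΔ hsep
end
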